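/- For no real numbers alpha, beta and no sign τ ∈ {+1,-1} does the derivation D = alpha·ad(e4)|_n + beta·ad(e5)|_n = [[-beta,-alpha,0],[alpha,-beta,0],[beta,0,-2beta]] of the Heisenberg algebra n satisfy the generalized nilsoliton equation Ric = τ( -Tr((D^s)^2)·Id - (1/2)[D,D*] + (Tr D)·D^s ), where Ric = [[-36864/1715,0,0],[0,-36864/1715,0],[-6144/245,0,36864/1715]]. -/
import Mathlib


open Matrix
open scoped Matrix

noncomputable section

abbrev W : Type := Fin 3 → ℝ

/-- standard basis of `ℝ³` -/
def f (i : Fin 3) : W := Pi.single i 1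

/-- the Heisenberg bracket `[e1,e2] = -e3` on `n = span{e1,e2,e3}` -/
def br3 (x y : W) : W := ![0, 0, -(x 0 * y 1 - x 1 * y 0)]

/-- the Gram matrix of the restricted metric on `n` in the basis `e1,e2,e3` -/
def G3 : Matrix (Fin 3) (Fin 3) ℝ :=
  !![497/576, 0, -7/12;
     0, 49/192, 0;
     -7/12, 0, 2]

/-- the restricted metric on `n` -/
def g3 (x y : W) : ℝ := ∑ i, ∑ j, x i * G3 i j * y j

/-- the metric adjoint `T*` of an endomorphism (as matrices): `T* = G⁻¹ Tᵀ G` -/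
def adj (T : Matrix (Fin 3) (Fin 3) ℝ) : Matrix (Fin 3) (Fin 3) ℝ := G3⁻¹ * Tᵀ * G3

/-- the derivation `D = α ad(e4)|_n + β ad(e5)|_n` -/
def Dm (α β : ℝ) : Matrix (Fin 3) (Fin 3) ℝ := !![-β, -α, 0; α, -β, 0; β, 0, -2 * β]

/-- the symmetric part `D^s = ½ (D + D*)` -/
def Dsym (α β : ℝ) : Matrix (Fin 3) (Fin 3) ℝ := (1/2 : ℝ) • (Dm α β + adj (Dm α β))

/-- the Ricci operator of the restricted metric on `n` -/
def RicM : Matrix (Fin 3) (Fin 3) ℝ :=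
  !![-36864/1715, 0, 0;
     0, -36864/1715, 0;
     -6144/245, 0, 36864/1715]

set_option maxHeartbeats 1000000 in
/-- No derivation `α ad(e4) + β ad(e5)` satisfies the generalized nilsoliton equation
`Ric = τ(−Tr((D^s)²) Id − ½ [D,D*] + (Tr D) D^s)` with `τ = ±1`. -/
theorem no_generalized_nilsoliton :
    ¬ ∃ (α β τ : ℝ), (τ = 1 ∨ τ = -1) ∧
      RicM = τ • (-((Dsym α β * Dsym α β).trace) • (1 : Matrix (Fin 3) (Fin 3) ℝ)
        - (1/2 : ℝ) • (Dm α β * adj (Dm α β) - adj (Dm α β) * Dm α β)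
        + (Dm α β).trace • Dsym α β) := by
  rintro ⟨α, β, τ, hτ, heq⟩
  have hGinv : G3⁻¹ = !![192/133, 0, 8/19; 0, 192/49, 0; 8/19, 0, 71/114] := by
    apply Matrix.inv_eq_right_inv
    ext i j
    fin_cases i <;> fin_cases j <;>
      simp [G3, Matrix.mul_apply, Fin.sum_univ_three] <;> norm_num
  have hDa : adj (Dm α β) =
      !![(-91/57)*β, (7/19)*α, (272/133)*β;
         (-71/21)*α, -β, (16/7)*α;
         (161/1368)*β, (49/456)*α, (-80/57)*β] := by
    have hDt : (Dm α β)ᵀ = !![-β, α, β; -α, -β, 0; 0, 0, -2*β] := by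
      ext i j
      fin_cases i <;> fin_cases j <;> simp [Dm]
    rw [adj, hGinv, hDt, G3, Matrix.mul_fin_three, Matrix.mul_fin_three]
    ext i j
    fin_cases i <;> fin_cases j <;> simp <;> ring
  have hDs : Dsym α β =
      !![(-74/57)*β, (-6/19)*α, (136/133)*β;
         (-25/21)*α, -β, (8/7)*α;
         (1529/2736)*β, (49/912)*α, (-97/57)*β] := by
    rw [Dsym, hDa]
    ext i j
    fin_cases i <;> fin_cases j <;> simp [Dm] <;> ring
  rw [hDa, hDs] at heq
  have h00 := congrFun (congrFun heq 0) 0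
  have h22 := congrFun (congrFun heq 2) 2
  simp only [RicM, Dm, Matrix.trace_fin_three, Matrix.mul_apply, Fin.sum_univ_three,
    Matrix.one_fin_three, Matrix.of_apply, Matrix.smul_apply, Matrix.add_apply, Matrix.sub_apply,
    Matrix.neg_apply, smul_eq_mul, Matrix.cons_val', Matrix.cons_val_zero,
    Matrix.cons_val_one, Matrix.head_cons, Matrix.cons_val_two, Matrix.tail_cons,
    Matrix.empty_val', Matrix.cons_val_fin_one, Matrix.head_fin_const] at h00 h22
  ring_nf at h00 h22
  rcases hτ with h | h <;> subst h <;>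
    nlinarith [sq_nonneg α, sq_nonneg β, h00, h22]
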